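/- Let L and R be finite nonempty families of pseudo-lines such that any two distinct members of L ∪ R cross exactly once, no three distinct members of L ∪ R take a common value at a common point, and l ≺ r holds for every l ∈ L and every r ∈ R. For l ∈ L let ρ(l) ∈ R denote the member of R whose crossing with l has the smallest x-coordinate among all crossings of l with members of R, and for distinct l, l' ∈ L say that l removes l' if the crossing of l' with ρ(l) has a smaller x-coordinate than the crossing of l with ρ(l). If an element l ∈ L is chosen uniformly at random and l together with all elements it removes are deleted from L, then the expected number of remaining elements is at most (|L| − 1)/2; equivalently, ∑_{l ∈ L} |{l' ∈ L : l' ≠ l and l does not remove l'}| ≤ |L|(|L| − 1)/2. -/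
import Mathlib


noncomputable local instance : DecidableEq (ℝ → ℝ) := Classical.decEq _

/-- `Prec f g` (written `f ≺ g`): the pseudo-lines `f` and `g` cross exactly once,
at a point `x₀` with `f x > g x` for all `x < x₀` and `f x < g x` for all `x > x₀`. -/
def Prec (f g : ℝ → ℝ) : Prop :=
  ∃ x₀ : ℝ, f x₀ = g x₀ ∧ (∀ x < x₀, g x < f x) ∧ (∀ x > x₀, f x < g x)

/-- Two pseudo-lines cross exactly once. -/
def CrossesOnce (f g : ℝ → ℝ) : Prop :=
  Prec f g ∨ Prec g f

lemma Prec.not_self (f : ℝ → ℝ) : ¬ Prec f f := by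
  rintro ⟨x₀, -, h1, -⟩
  exact lt_irrefl _ (h1 (x₀ - 1) (by linarith))

/-- `f` and `g` cross at `c`: equality there and strict signs on both sides. -/
def CrossAt (f g : ℝ → ℝ) (c : ℝ) : Prop :=
  f c = g c ∧ (∀ x < c, g x < f x) ∧ (∀ x > c, f x < g x)

lemma prec_crossAt {f g : ℝ → ℝ} (h : Prec f g) {c : ℝ} (hc : f c = g c) :
    CrossAt f g c := by
  obtain ⟨x₀, he, h1, h2⟩ := h
  rcases lt_trichotomy c x₀ with hlt | heq | hgt
  · exact absurd hc (h1 c hlt).ne'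
  · subst heq; exact ⟨hc, h1, h2⟩
  · exact absurd hc (h2 c hgt).ne

lemma aux_no_both {l l' r r' : ℝ → ℝ} {a a' b b' : ℝ}
    (hA : CrossAt l r a) (hA' : CrossAt l r' a')
    (hB : CrossAt l' r b) (hB' : CrossAt l' r' b')
    (T1 : ∀ x, ¬(l x = l' x ∧ l' x = r x))
    (T2 : ∀ x, ¬(l x = r x ∧ r x = r' x))
    (T3 : ∀ x, ¬(l' x = r x ∧ r x = r' x))
    (T4 : ∀ x, ¬(l x = l' x ∧ l' x = r' x))
    (haa' : a ≤ a') (hb'b : b' ≤ b) (hab : a ≤ b) (hb'a' : b' ≤ a')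
    (hab' : a ≤ b') : False := by
  rcases eq_or_lt_of_le hab' with heq | hlt
  · -- a = b'
    subst heq
    rcases eq_or_lt_of_le hab with heqb | hltb
    · -- a = b
      exact T1 a ⟨hA.1.trans (heqb ▸ hB.1).symm, heqb ▸ hB.1⟩
    · have hr : r a < l' a := hB.2.1 a hltb
      rcases eq_or_lt_of_le hb'a' with heqa | hlta
      · -- a = a'
        exact T2 a ⟨hA.1, hA.1.symm.trans (heqa ▸ hA'.1)⟩
      · have hr' : r' a < l a := hA'.2.1 a hlta
        have h1 := hB'.1
        have h2 := hA.1
        linarith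
  · -- a < b'
    have hlb' : l b' < r b' := hA.2.2 b' hlt
    rcases eq_or_lt_of_le hb'b with heq | hltb
    · -- b' = b
      exact T3 b' ⟨heq ▸ hB.1, (heq ▸ hB.1).symm.trans hB'.1⟩
    · have hr : r b' < l' b' := hB.2.1 b' hltb
      rcases eq_or_lt_of_le hb'a' with heqa | hlta
      · -- b' = a'
        exact T4 b' ⟨(heqa ▸ hA'.1).trans hB'.1.symm, hB'.1⟩
      · have hr' : r' b' < l b' := hA'.2.1 b' hlta
        have h1 := hB'.1
        linarith

lemma ite_pair_le (x y : Prop) [Decidable x] [Decidable y] (h : ¬(x ∧ y)) :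
    (if x then (1 : ℕ) else 0) + (if y then (1 : ℕ) else 0) ≤ 1 := by
  by_cases h1 : x <;> by_cases h2 : y <;> simp [h1, h2]
  exact h ⟨h1, h2⟩

/-- Picking `l ∈ L` uniformly at random and deleting `l` together with all
elements it removes leaves at most `(|L| − 1)/2` elements in expectation;
equivalently, `∑_{l ∈ L} |{l' ≠ l : l does not remove l'}| ≤ |L|(|L|−1)/2`.
Here `cross f g` is the x-coordinate of the unique crossing of `f` and `g`,
`ρ l` is the member of `R` whose crossing with `l` is leftmost, and `l`
removes `l'` iff `cross l' (ρ l) < cross l (ρ l)`. -/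
theorem expected_pruned_size
    (L R : Finset (ℝ → ℝ)) (hL : L.Nonempty) (hR : R.Nonempty)
    (hcont : ∀ f ∈ L ∪ R, Continuous f)
    (hcross : ∀ f ∈ L ∪ R, ∀ g ∈ L ∪ R, f ≠ g → CrossesOnce f g)
    (hnothree : ∀ f ∈ L ∪ R, ∀ g ∈ L ∪ R, ∀ h ∈ L ∪ R, f ≠ g → f ≠ h → g ≠ h →
      ∀ x : ℝ, ¬(f x = g x ∧ g x = h x))
    (hprec : ∀ l ∈ L, ∀ r ∈ R, Prec l r)
    (cross : (ℝ → ℝ) → (ℝ → ℝ) → ℝ)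
    (hcrossdef : ∀ f ∈ L ∪ R, ∀ g ∈ L ∪ R, f ≠ g → f (cross f g) = g (cross f g))
    (ρ : (ℝ → ℝ) → (ℝ → ℝ))
    (hρmem : ∀ l ∈ L, ρ l ∈ R)
    (hρmin : ∀ l ∈ L, ∀ r ∈ R, cross l (ρ l) ≤ cross l r) :
    2 * ∑ l ∈ L,
        (L.filter (fun l' => l' ≠ l ∧ ¬ cross l' (ρ l) < cross l (ρ l))).card
      ≤ L.card * (L.card - 1) := by
  classical
  have hne_LR : ∀ f ∈ L, ∀ g ∈ R, f ≠ g := by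
    intro f hf g hg h
    subst h
    exact Prec.not_self f (hprec f hf f hg)
  have key : ∀ l ∈ L, ∀ l' ∈ L, l ≠ l' →
      cross l' (ρ l) < cross l (ρ l) ∨ cross l (ρ l') < cross l' (ρ l') := by
    intro l hl l' hl' hne
    by_contra hcon
    push_neg at hcon
    obtain ⟨h1, h2⟩ := hcon
    have hrR : ρ l ∈ R := hρmem l hl
    have hr'R : ρ l' ∈ R := hρmem l' hl'
    have hlu : l ∈ L ∪ R := Finset.mem_union_left _ hl
    have hl'u : l' ∈ L ∪ R := Finset.mem_union_left _ hl'
    have hru : ρ l ∈ L ∪ R := Finset.mem_union_right _ hrR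
    have hr'u : ρ l' ∈ L ∪ R := Finset.mem_union_right _ hr'R
    have hlr : l ≠ ρ l := hne_LR l hl _ hrR
    have hlr' : l ≠ ρ l' := hne_LR l hl _ hr'R
    have hl'r : l' ≠ ρ l := hne_LR l' hl' _ hrR
    have hl'r' : l' ≠ ρ l' := hne_LR l' hl' _ hr'R
    have cA : CrossAt l (ρ l) (cross l (ρ l)) :=
      prec_crossAt (hprec l hl _ hrR) (hcrossdef l hlu _ hru hlr)
    have cA' : CrossAt l (ρ l') (cross l (ρ l')) :=
      prec_crossAt (hprec l hl _ hr'R) (hcrossdef l hlu _ hr'u hlr')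
    have cB : CrossAt l' (ρ l) (cross l' (ρ l)) :=
      prec_crossAt (hprec l' hl' _ hrR) (hcrossdef l' hl'u _ hru hl'r)
    have cB' : CrossAt l' (ρ l') (cross l' (ρ l')) :=
      prec_crossAt (hprec l' hl' _ hr'R) (hcrossdef l' hl'u _ hr'u hl'r')
    by_cases hrr : ρ l = ρ l'
    · rw [← hrr] at h2
      have heq : cross l (ρ l) = cross l' (ρ l) := le_antisymm h1 h2
      exact hnothree l hlu l' hl'u (ρ l) hru hne hlr hl'r (cross l (ρ l))
        ⟨cA.1.trans (heq ▸ cB.1).symm, heq ▸ cB.1⟩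
    · have haa' : cross l (ρ l) ≤ cross l (ρ l') := hρmin l hl _ hr'R
      have hb'b : cross l' (ρ l') ≤ cross l' (ρ l) := hρmin l' hl' _ hrR
      rcases le_total (cross l (ρ l)) (cross l' (ρ l')) with hab' | hb'a
      · exact aux_no_both cA cA' cB cB'
          (hnothree l hlu l' hl'u (ρ l) hru hne hlr hl'r)
          (hnothree l hlu (ρ l) hru (ρ l') hr'u hlr hlr' hrr)
          (hnothree l' hl'u (ρ l) hru (ρ l') hr'u hl'r hl'r' hrr)
          (hnothree l hlu l' hl'u (ρ l') hr'u hne hlr' hl'r')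
          haa' hb'b h1 h2 hab'
      · exact aux_no_both cB' cB cA' cA
          (hnothree l' hl'u l hlu (ρ l') hr'u hne.symm hl'r' hlr')
          (hnothree l' hl'u (ρ l') hr'u (ρ l) hru hl'r' hl'r (Ne.symm hrr))
          (hnothree l hlu (ρ l') hr'u (ρ l) hru hlr' hlr (Ne.symm hrr))
          (hnothree l' hl'u l hlu (ρ l) hru hne.symm hl'r hlr)
          hb'b haa' h2 h1 hb'a
  -- counting
  have hsum : ∀ l ∈ L,
      (L.filter (fun l' => l' ≠ l ∧ ¬ cross l' (ρ l) < cross l (ρ l))).card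
        = ∑ l' ∈ L, if l' ≠ l ∧ ¬ cross l' (ρ l) < cross l (ρ l) then 1 else 0 :=
    fun l _ => Finset.card_filter _ _
  calc 2 * ∑ l ∈ L,
        (L.filter (fun l' => l' ≠ l ∧ ¬ cross l' (ρ l) < cross l (ρ l))).card
      = (∑ l ∈ L, ∑ l' ∈ L, if l' ≠ l ∧ ¬ cross l' (ρ l) < cross l (ρ l) then 1 else 0)
        + ∑ l ∈ L, ∑ l' ∈ L, if l ≠ l' ∧ ¬ cross l (ρ l') < cross l' (ρ l') then 1 else 0 := by
        rw [Finset.sum_congr rfl hsum, two_mul]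
        congr 1
        exact Finset.sum_comm
    _ = ∑ l ∈ L, ∑ l' ∈ L,
          ((if l' ≠ l ∧ ¬ cross l' (ρ l) < cross l (ρ l) then 1 else 0)
            + if l ≠ l' ∧ ¬ cross l (ρ l') < cross l' (ρ l') then 1 else 0) := by
        rw [← Finset.sum_add_distrib]
        exact Finset.sum_congr rfl fun l _ => (Finset.sum_add_distrib).symm
    _ ≤ ∑ l ∈ L, ∑ l' ∈ L, if l' ≠ l then 1 else 0 := by
        refine Finset.sum_le_sum fun l hl => Finset.sum_le_sum fun l' hl' => ?_
        by_cases h : l' = l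
        · simp [h]
        · rw [if_pos h]
          refine ite_pair_le _ _ ?_
          rintro ⟨⟨-, hx⟩, ⟨-, hy⟩⟩
          rcases key l hl l' hl' (fun e => h e.symm) with hk | hk
          · exact hx hk
          · exact hy hk
    _ = ∑ l ∈ L, (L.card - 1) := by
        refine Finset.sum_congr rfl fun l hl => ?_
        rw [← Finset.card_filter]
        rw [Finset.filter_ne' L l, Finset.card_erase_of_mem hl]
    _ = L.card * (L.card - 1) := by
        rw [Finset.sum_const, smul_eq_mul]
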